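/- arXiv:2508.17392 — 3 statements merged into one kernel-verified Lean document; each statement's English description precedes it below -/
import Mathlib

section
/- For every unitary A ∈ U(d) there exists a unitary B ∈ U(d) with B² = 1 such that ‖B − A‖_p ≤ ‖1 − A²‖_p, for every Schatten p-norm with 1 ≤ p < ∞. -/
open scoped Matrix ComplexOrder

open Matrix in
/-- The Schatten `p`-norm: `(∑ σᵢ(A)^p)^(1/p)` where `σᵢ(A) = √(eigenvalues of AᴴA)`,
which equals `(Tr |A|^p)^(1/p)`. -/
noncomputable def schattenNorm {n : ℕ} (p : ℝ) (A : Matrix (Fin n) (Fin n) ℂ) : ℝ :=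
  (∑ i, Real.sqrt ((Matrix.isHermitian_conjTranspose_mul_self A).eigenvalues i) ^ p) ^ (1 / p)

/-- The operator norm of a matrix, acting on Euclidean space. -/
noncomputable def opNorm {n : ℕ} (A : Matrix (Fin n) (Fin n) ℂ) : ℝ :=
  ‖Matrix.toEuclideanCLM (𝕜 := ℂ) (n := Fin n) A‖

/-!
With `S = A + star A` (self-adjoint, and commuting with `A` since `A` is normal), take `B = sign S`
by functional calculus: a self-adjoint involution commuting with `A`, with `B * S = |S|`. Then
`(B - A)ᴴ (B - A) = 2 - |S|` and `(1 - A²)ᴴ (1 - A²) = 4 - S²` are both functions of `S`, so the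
squared singular values of `B - A` and `1 - A²` are `2 - |s|` and `4 - s²` over the eigenvalues `s`
of `S`. As an eigenvalue of a positive semidefinite matrix, `4 - s² ≥ 0`, and on `|s| ≤ 2` we
have `2 - |s| ≤ 4 - s²`.
-/

section StarRing

variable {R : Type*} [Ring R] [StarRing R] {A B : R}

lemma star_sub_mul_sub_eq_two_sub (hA : A ∈ unitary R) (hB : IsSelfAdjoint B)
    (hBB : B * B = 1) (hAB : Commute B A) :
    star (B - A) * (B - A) = 2 - B * (A + star A) := by
  have hAB' : star A * B = B * star A := by simpa [hB.star_eq] using hAB.star_star.eq.symm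
  rw [star_sub, hB.star_eq, sub_mul, mul_sub, mul_sub, hBB, Unitary.star_mul_self_of_mem hA,
    hAB', ← one_add_one_eq_two]
  noncomm_ring

lemma star_one_sub_sq_mul_eq_four_sub (hA : A ∈ unitary R) :
    star (1 - A ^ 2) * (1 - A ^ 2) = 4 - (A + star A) ^ 2 := by
  have h1 := Unitary.star_mul_self_of_mem hA
  have h2 := Unitary.mul_star_self_of_mem hA
  have expand_left : star (1 - A ^ 2) * (1 - A ^ 2)
      = 1 - A * A - star A * star A + star A * (star A * A) * A := by
    rw [star_sub, star_one, star_pow]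
    noncomm_ring
  have expand_right : (4 : R) - (A + star A) ^ 2
      = 1 + 1 + 1 + 1 - A * A - star A * star A - A * star A - star A * A := by
    rw [show (4 : R) = 1 + 1 + 1 + 1 by norm_num]
    noncomm_ring
  rw [expand_left, expand_right, h1, h2, mul_one, h1]
  abel

end StarRing

namespace Matrix

variable {n 𝕜 : Type*} [RCLike 𝕜] [Fintype n] [DecidableEq n]

lemma continuousOn_spectrum_real (A : Matrix n n 𝕜) (f : ℝ → ℝ) :
    ContinuousOn f (spectrum ℝ A) :=
  A.finite_real_spectrum.continuousOn f

namespace IsHermitian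

lemma map_eigenvalues_of_eq_cfc {A M : Matrix n n 𝕜} (hA : A.IsHermitian) (hM : M.IsHermitian)
    {f : ℝ → ℝ} (h : M = cfc f A) :
    Finset.univ.val.map hM.eigenvalues = Finset.univ.val.map (f ∘ hA.eigenvalues) := by
  subst h
  apply Multiset.map_injective (RCLike.ofReal_injective (K := 𝕜))
  rw [Multiset.map_map, Multiset.map_map, ← hM.roots_charpoly_eq_eigenvalues, hA.charpoly_cfc_eq,
    Polynomial.roots_prod _ _ (by simp [Finset.prod_ne_zero_iff, Polynomial.X_sub_C_ne_zero])]
  simp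

lemma apply_eigenvalues_nonneg_of_conjTranspose_mul_self_eq_cfc {A X : Matrix n n 𝕜}
    (hA : A.IsHermitian) {f : ℝ → ℝ} (h : Xᴴ * X = cfc f A) (i : n) :
    0 ≤ f (hA.eigenvalues i) := by
  have hmem : f (hA.eigenvalues i) ∈
      Finset.univ.val.map (isHermitian_conjTranspose_mul_self X).eigenvalues := by
    rw [map_eigenvalues_of_eq_cfc hA _ h]
    exact Multiset.mem_map_of_mem _ (Finset.mem_univ_val i)
  obtain ⟨j, -, hj⟩ := Multiset.mem_map.mp hmem
  exact hj ▸ eigenvalues_conjTranspose_mul_self_nonneg X j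

lemma exists_involution_mul_eq_cfc_abs {A : Matrix n n 𝕜} (hA : A.IsHermitian) :
    ∃ B : Matrix n n 𝕜, IsSelfAdjoint B ∧ B * B = 1 ∧ B * A = cfc (fun x : ℝ ↦ |x|) A ∧
      ∀ C : Matrix n n 𝕜, Commute A C → Commute B C := by
  have hcont := A.continuousOn_spectrum_real
  let sgn : ℝ → ℝ := fun x ↦ if 0 ≤ x then 1 else -1
  refine ⟨cfc sgn A, cfc_predicate _ _, ?_, ?_, fun C hC ↦ hC.cfc_real sgn⟩
  · rw [← cfc_mul _ _ _ (hcont _) (hcont _), ← cfc_one ℝ A hA.isSelfAdjoint]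
    exact cfc_congr fun x _ ↦ by by_cases hx : 0 ≤ x <;> simp [sgn, hx]
  · calc cfc sgn A * A = cfc sgn A * cfc (fun x ↦ x) A := by rw [cfc_id' ℝ A hA.isSelfAdjoint]
      _ = _ := by
        rw [← cfc_mul _ _ _ (hcont _) (hcont _)]
        refine cfc_congr fun x _ ↦ ?_
        by_cases hx : 0 ≤ x
        · simp [sgn, hx, abs_of_nonneg]
        · simp [sgn, hx, abs_of_neg (not_le.mp hx)]

end IsHermitian

end Matrix

lemma schattenNorm_eq_of_conjTranspose_mul_self_eq_cfc {n : ℕ} {X H : Matrix (Fin n) (Fin n) ℂ}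
    (hH : H.IsHermitian) {f : ℝ → ℝ} (hX : Xᴴ * X = cfc f H) (p : ℝ) :
    schattenNorm p X = (∑ i, √(f (hH.eigenvalues i)) ^ p) ^ (1 / p) := by
  unfold schattenNorm
  congr 1
  simpa only [Multiset.map_map, Function.comp_def, Finset.sum_eq_multiset_sum] using
    congrArg (fun s ↦ (s.map fun x ↦ √x ^ p).sum) (hH.map_eigenvalues_of_eq_cfc _ hX)

lemma schattenNorm_le_of_conjTranspose_mul_self_eq_cfc {n : ℕ} {X Y H : Matrix (Fin n) (Fin n) ℂ}
    (hH : H.IsHermitian) {f g : ℝ → ℝ} (hX : Xᴴ * X = cfc f H) (hY : Yᴴ * Y = cfc g H)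
    (hfg : ∀ i, f (hH.eigenvalues i) ≤ g (hH.eigenvalues i)) {p : ℝ} (hp : 0 ≤ p) :
    schattenNorm p X ≤ schattenNorm p Y := by
  rw [schattenNorm_eq_of_conjTranspose_mul_self_eq_cfc hH hX,
    schattenNorm_eq_of_conjTranspose_mul_self_eq_cfc hH hY]
  gcongr with i
  exact hfg i

lemma two_sub_abs_le_four_sub_sq {x : ℝ} (hx : 0 ≤ 4 - x ^ 2) : 2 - |x| ≤ 4 - x ^ 2 := by
  nlinarith [abs_nonneg x, sq_abs x]

theorem exists_involution_close_schatten {d : ℕ} (A : Matrix (Fin d) (Fin d) ℂ)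
    (hA : A ∈ Matrix.unitaryGroup (Fin d) ℂ) :
    ∃ B ∈ Matrix.unitaryGroup (Fin d) ℂ, B ^ 2 = 1 ∧
      ∀ p : ℝ, 1 ≤ p → schattenNorm p (B - A) ≤ schattenNorm p (1 - A ^ 2) := by
  set S := A + star A
  have hS : S.IsHermitian := IsSelfAdjoint.add_star_self A
  obtain ⟨B, hB, hBB, hBS, hBcomm⟩ := hS.exists_involution_mul_eq_cfc_abs
  have hBA : Commute B A := hBcomm A ((Commute.refl A).add_left (commute_unitary_star_self hA))
  have hcont := S.continuousOn_spectrum_real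
  have hdist : (B - A)ᴴ * (B - A) = cfc (fun x : ℝ ↦ 2 - |x|) S := by
    rw [← Matrix.star_eq_conjTranspose, star_sub_mul_sub_eq_two_sub hA hB hBB hBA, hBS,
      cfc_sub _ _ _ (hcont _) (hcont _), cfc_const 2 S hS.isSelfAdjoint, map_ofNat]
  have hdefect : (1 - A ^ 2)ᴴ * (1 - A ^ 2) = cfc (fun x : ℝ ↦ 4 - x ^ 2) S := by
    rw [← Matrix.star_eq_conjTranspose, star_one_sub_sq_mul_eq_four_sub hA,
      cfc_sub _ _ _ (hcont _) (hcont _), cfc_const 4 S hS.isSelfAdjoint,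
      cfc_pow_id S 2 hS.isSelfAdjoint, map_ofNat]
  refine ⟨B, ?_, sq B ▸ hBB, fun p hp ↦ ?_⟩
  · simp only [Matrix.unitaryGroup, Unitary.mem_iff, hB.star_eq, hBB, and_self]
  · refine schattenNorm_le_of_conjTranspose_mul_self_eq_cfc hS hdist hdefect
      (fun i ↦ two_sub_abs_le_four_sub_sq ?_) (by linarith)
    exact hS.apply_eigenvalues_nonneg_of_conjTranspose_mul_self_eq_cfc hdefect i
end

section
/- For every unitary A ∈ U(d) there exists a unitary involution B ∈ U(d) (B² = 1) such that ‖B − A‖_op ≤ ‖1 − A²‖_op. -/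
open scoped Matrix ComplexOrder

/-!
Take `B = s(A)` by the continuous functional calculus, where `s z = ±1` is the sign of `Re z`
(finitely many eigenvalues, so `s` is continuous on the spectrum). Since `s` is real with
`s² = 1`, `B` is a self-adjoint involution, hence unitary. As `A` is normal, `‖B - A‖` and
`‖1 - A²‖` are the maxima of `|s z - z|` and `|1 - z²|` over the spectrum, and the scalar
inequality holds because `1 - z² = (1 - z)(1 + z)`, where the factor `1 ± z` with the sign
opposite to `s z` has real part, hence modulus, at least `1`.
-/

namespace Complex

noncomputable def reSign (z : ℂ) : ℂ := if 0 ≤ z.re then 1 else -1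

lemma reSign_mul_self (z : ℂ) : reSign z * reSign z = 1 := by
  unfold reSign; split_ifs <;> norm_num

lemma star_reSign (z : ℂ) : star (reSign z) = reSign z := by
  unfold reSign; split_ifs <;> simp

lemma norm_reSign_sub_le (z : ℂ) : ‖reSign z - z‖ ≤ ‖1 - z ^ 2‖ := by
  rw [show 1 - z ^ 2 = (1 - z) * (1 + z) by ring, norm_mul, reSign]
  split_ifs with h
  · have : 1 ≤ ‖1 + z‖ := by simpa using (le_add_of_nonneg_right h).trans (re_le_norm (1 + z))
    exact le_mul_of_one_le_right (norm_nonneg _) this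
  · have : 1 ≤ ‖1 - z‖ := by
      simpa using (le_sub_self_iff 1 |>.mpr (not_le.mp h).le).trans (re_le_norm (1 - z))
    rw [show -1 - z = -(1 + z) by ring, norm_neg]
    exact le_mul_of_one_le_left (norm_nonneg _) this

end Complex

open Complex in
theorem IsStarNormal.exists_involution_norm_sub_le {A : Type*} [CStarAlgebra A] (a : A)
    [IsStarNormal a] (ha : (spectrum ℂ a).Finite) :
    ∃ s ∈ unitary A, s ^ 2 = 1 ∧ ‖s - a‖ ≤ ‖1 - a ^ 2‖ := by
  have hcont : ContinuousOn reSign (spectrum ℂ a) := ha.continuousOn _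
  refine ⟨cfc reSign a, ?_, ?_, ?_⟩
  · rw [cfc_unitary_iff reSign a]
    exact fun z _ ↦ by rw [star_reSign, reSign_mul_self]
  · rw [sq, ← cfc_mul reSign reSign a, ← cfc_one ℂ a]
    exact cfc_congr fun z _ ↦ reSign_mul_self z
  · have h_sub : cfc reSign a - a = cfc (fun z ↦ reSign z - z) a := by
      rw [cfc_sub reSign (fun z ↦ z) a, cfc_id' ℂ a]
    have h_one_sub_sq : 1 - a ^ 2 = cfc (fun z : ℂ ↦ 1 - z ^ 2) a := by
      rw [cfc_sub (fun _ ↦ 1) (· ^ 2) a, cfc_const_one ℂ a, cfc_pow_id a 2]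
    rw [h_sub, h_one_sub_sq]
    exact norm_cfc_le (norm_nonneg _) fun z hz ↦
      (norm_reSign_sub_le z).trans (norm_apply_le_norm_cfc (fun z : ℂ ↦ 1 - z ^ 2) a hz)

open scoped Matrix.Norms.L2Operator in
theorem Matrix.exists_involution_l2_opNorm_sub_le {n : Type*} [Fintype n] [DecidableEq n]
    (A : Matrix n n ℂ) [IsStarNormal A] :
    ∃ B ∈ Matrix.unitaryGroup n ℂ, B ^ 2 = 1 ∧ ‖B - A‖ ≤ ‖1 - A ^ 2‖ :=
  IsStarNormal.exists_involution_norm_sub_le A A.finite_spectrum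

theorem exists_involution_close_opNorm {d : ℕ} (A : Matrix (Fin d) (Fin d) ℂ)
    (hA : A ∈ Matrix.unitaryGroup (Fin d) ℂ) :
    ∃ B ∈ Matrix.unitaryGroup (Fin d) ℂ, B ^ 2 = 1 ∧
      opNorm (B - A) ≤ opNorm (1 - A ^ 2) :=
  have : IsStarNormal A := isStarNormal_of_mem_unitary hA
  Matrix.exists_involution_l2_opNorm_sub_le A
end

section
/- For every M ∈ M_n(ℂ) there exists a unitary R ∈ U(n) such that ‖M − R‖_p ≤ ‖M*M − 1‖_p, for every Schatten p-norm with 1 ≤ p < ∞. -/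
/-!
Take a singular value decomposition `M = V Σ U*` and put `R = V U*`. Then `M - R = V (Σ - 1) U*`
and `M*M - 1 = U (Σ² - 1) U*`, whose singular values are `|σᵢ - 1|` and
`|σᵢ² - 1| = |σᵢ - 1| (σᵢ + 1) ≥ |σᵢ - 1|` since `σᵢ ≥ 0`; the inequality therefore holds termwise
in every Schatten sum.
-/

open scoped Matrix ComplexOrder

open Module

theorem exists_orthonormalBasis_eq_norm_smul {𝕜 E ι : Type*} [RCLike 𝕜] [NormedAddCommGroup E]
    [InnerProductSpace 𝕜 E] [FiniteDimensional 𝕜 E] [Fintype ι]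
    (card_ι : finrank 𝕜 E = Fintype.card ι) {f : ι → E}
    (hf : Pairwise fun i j => inner 𝕜 (f i) (f j) = 0) :
    ∃ b : OrthonormalBasis ι 𝕜 E, ∀ i, f i = (‖f i‖ : 𝕜) • b i := by
  have hs : Orthonormal 𝕜 ({i | f i ≠ 0}.domRestrict fun i => (‖f i‖⁻¹ : 𝕜) • f i) := by
    refine ⟨fun i => norm_smul_inv_norm i.2, fun i j hij => ?_⟩
    simp [inner_smul_left, inner_smul_right, hf (Subtype.coe_ne_coe.mpr hij)]
  obtain ⟨b, hb⟩ := hs.exists_orthonormalBasis_extension_of_card_eq card_ι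
  refine ⟨b, fun i => ?_⟩
  by_cases hi : f i = 0
  · simp [hi]
  · rw [hb i hi, smul_inv_smul₀ (by simpa using hi)]

namespace Matrix

variable {𝕜 ι : Type*} [RCLike 𝕜] [DecidableEq ι]

theorem diagonal_ofReal_comp_sub_one (c : ι → ℝ) :
    diagonal (RCLike.ofReal ∘ (c - 1) : ι → 𝕜) = diagonal (RCLike.ofReal ∘ c) - 1 := by
  rw [← diagonal_one, diagonal_sub]
  congr 1
  ext i
  simp

variable [Fintype ι]

theorem conjTranspose_diagonal_ofReal_mul_self (c : ι → ℝ) :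
    (diagonal (RCLike.ofReal ∘ c : ι → 𝕜))ᴴ * diagonal (RCLike.ofReal ∘ c) =
      diagonal (RCLike.ofReal ∘ (c ^ 2)) := by
  simp [diagonal_conjTranspose, diagonal_mul_diagonal, sq, Function.comp_def]

theorem conjTranspose_mul_self_unitary_mul_mul_star {V : Matrix ι ι 𝕜}
    (hV : V ∈ unitaryGroup ι 𝕜) (D U : Matrix ι ι 𝕜) :
    (V * D * star U)ᴴ * (V * D * star U) = U * (Dᴴ * D) * star U := by
  have hV' : Vᴴ * V = 1 := Unitary.star_mul_self_of_mem hV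
  simp only [conjTranspose_mul, star_eq_conjTranspose, conjTranspose_conjTranspose]
  calc U * (Dᴴ * Vᴴ) * (V * D * Uᴴ) = U * Dᴴ * (Vᴴ * V) * D * Uᴴ := by noncomm_ring
    _ = U * (Dᴴ * D) * Uᴴ := by rw [hV', Matrix.mul_one]; noncomm_ring

theorem IsHermitian.map_eigenvalues_eq_of_eq_unitary_conj {A U : Matrix ι ι 𝕜}
    (hA : A.IsHermitian) (hU : U ∈ unitaryGroup ι 𝕜) {e : ι → ℝ}
    (h : A = U * diagonal (RCLike.ofReal ∘ e) * star U) :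
    Finset.univ.val.map hA.eigenvalues = Finset.univ.val.map e := by
  have hchar : A.charpoly = (diagonal (RCLike.ofReal ∘ e : ι → 𝕜)).charpoly := by
    rw [h, charpoly_mul_comm, ← Matrix.mul_assoc, Unitary.star_mul_self_of_mem hU,
      Matrix.one_mul]
  apply Multiset.map_injective (RCLike.ofReal_injective (K := 𝕜))
  rw [Multiset.map_map, ← hA.roots_charpoly_eq_eigenvalues, hchar, charpoly_diagonal,
    Polynomial.roots_prod _ _ (Finset.prod_ne_zero_iff.mpr fun i _ => Polynomial.X_sub_C_ne_zero _)]
  simp [Multiset.map_map]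

theorem exists_unitary_mul_diagonal_of_isDiag_conjTranspose_mul_self {A : Matrix ι ι 𝕜}
    (hA : (Aᴴ * A).IsDiag) :
    ∃ V ∈ unitaryGroup ι 𝕜, ∃ σ : ι → ℝ, 0 ≤ σ ∧ A = V * diagonal (RCLike.ofReal ∘ σ) := by
  set col : ι → EuclideanSpace 𝕜 ι := fun j => WithLp.toLp 2 (Aᵀ j)
  have hcol : Pairwise fun i j => inner 𝕜 (col i) (col j) = 0 := fun i j hij => by
    simpa [col, EuclideanSpace.inner_eq_star_dotProduct, mul_apply, dotProduct, mul_comm]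
      using hA hij
  obtain ⟨b, hb⟩ := exists_orthonormalBasis_eq_norm_smul (by simp) hcol
  refine ⟨(EuclideanSpace.basisFun ι 𝕜).toBasis.toMatrix b.toBasis,
    (EuclideanSpace.basisFun ι 𝕜).toMatrix_orthonormalBasis_mem_unitary b,
    fun j => ‖col j‖, fun j => norm_nonneg _, ?_⟩
  ext i j
  simpa [col, mul_diagonal, Basis.toMatrix_apply, RCLike.real_smul_eq_coe_mul, mul_comm]
    using congrArg (· i) (hb j)

theorem exists_svd (M : Matrix ι ι 𝕜) :
    ∃ V ∈ unitaryGroup ι 𝕜, ∃ U ∈ unitaryGroup ι 𝕜, ∃ σ : ι → ℝ,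
      0 ≤ σ ∧ M = V * diagonal (RCLike.ofReal ∘ σ) * star U := by
  have hH := isHermitian_conjTranspose_mul_self M
  set U := hH.eigenvectorUnitary
  have hU : (U : Matrix ι ι 𝕜) ∈ unitaryGroup ι 𝕜 := U.2
  have hdiag : ((M * (U : Matrix ι ι 𝕜))ᴴ * (M * U)).IsDiag := by
    have hUHU := hH.conjStarAlgAut_star_eigenvectorUnitary
    rw [Unitary.conjStarAlgAut_star_apply] at hUHU
    rw [conjTranspose_mul, ← star_eq_conjTranspose (U : Matrix ι ι 𝕜), Matrix.mul_assoc,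
      ← Matrix.mul_assoc Mᴴ, ← Matrix.mul_assoc, hUHU]
    exact isDiag_diagonal _
  obtain ⟨V, hV, σ, hσ, hMU⟩ := exists_unitary_mul_diagonal_of_isDiag_conjTranspose_mul_self hdiag
  refine ⟨V, hV, U, hU, σ, hσ, ?_⟩
  rw [← hMU, Matrix.mul_assoc, Unitary.mul_star_self_of_mem hU, Matrix.mul_one]

end Matrix

open Matrix

theorem schattenNorm_unitary_mul_diagonal_mul_star {n : ℕ} {V U : Matrix (Fin n) (Fin n) ℂ}
    (hV : V ∈ unitaryGroup (Fin n) ℂ) (hU : U ∈ unitaryGroup (Fin n) ℂ) (c : Fin n → ℝ) (p : ℝ) :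
    schattenNorm p (V * diagonal (RCLike.ofReal ∘ c) * star U) = (∑ i, |c i| ^ p) ^ (1 / p) := by
  have hA := isHermitian_conjTranspose_mul_self (V * diagonal (RCLike.ofReal ∘ c) * star U)
  have hspec := hA.map_eigenvalues_eq_of_eq_unitary_conj hU <| by
    rw [conjTranspose_mul_self_unitary_mul_mul_star hV, conjTranspose_diagonal_ofReal_mul_self]
  have hsum := congrArg (fun s => (s.map fun x => √x ^ p).sum) hspec
  simp only [Multiset.map_map, Function.comp_def, ← Finset.sum_eq_multiset_sum, Pi.pow_apply,
    Real.sqrt_sq_eq_abs] at hsum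
  rw [schattenNorm, hsum]

theorem abs_sub_one_le_abs_sq_sub_one {x : ℝ} (hx : 0 ≤ x) : |x - 1| ≤ |x ^ 2 - 1| := by
  rw [show x ^ 2 - 1 = (x - 1) * (x + 1) by ring, abs_mul]
  exact le_mul_of_one_le_right (abs_nonneg _) (by rw [abs_of_nonneg (by linarith)]; linarith)

theorem exists_unitary_close_schatten {n : ℕ} (M : Matrix (Fin n) (Fin n) ℂ) :
    ∃ R ∈ Matrix.unitaryGroup (Fin n) ℂ,
      ∀ p : ℝ, 1 ≤ p → schattenNorm p (M - R) ≤ schattenNorm p (Mᴴ * M - 1) := by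
  obtain ⟨V, hV, U, hU, σ, hσ, rfl⟩ := M.exists_svd
  set D := diagonal (RCLike.ofReal ∘ σ : Fin n → ℂ)
  refine ⟨V * star U, mul_mem hV (Unitary.star_mem hU), fun p hp => ?_⟩
  have hdiff : V * D * star U - V * star U = V * diagonal (RCLike.ofReal ∘ (σ - 1)) * star U := by
    rw [diagonal_ofReal_comp_sub_one, Matrix.mul_sub, Matrix.sub_mul, Matrix.mul_one]
  have hgram : (V * D * star U)ᴴ * (V * D * star U) - 1 =
      U * diagonal (RCLike.ofReal ∘ (σ ^ 2 - 1)) * star U := by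
    rw [conjTranspose_mul_self_unitary_mul_mul_star hV, conjTranspose_diagonal_ofReal_mul_self,
      diagonal_ofReal_comp_sub_one, Matrix.mul_sub, Matrix.sub_mul, Matrix.mul_one,
      Unitary.mul_star_self_of_mem hU]
  rw [hdiff, hgram, schattenNorm_unitary_mul_diagonal_mul_star hV hU,
    schattenNorm_unitary_mul_diagonal_mul_star hU hU]
  gcongr (∑ i, ?_ ^ p) ^ _ with i
  exact abs_sub_one_le_abs_sq_sub_one (hσ i)
end
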